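/- Let N ≥ 1, let F ⊆ ℤ^N be a finite set containing a nonzero element, let δ > 0 and let K ⊆ ℤ^N be a finite (F,δ)-invariant set, i.e. |K ∩ ⋂_{g∈F}(K − g)| ≥ (1−δ)|K|. Define ℓ : K → ℕ by ℓ(g) = min{n ≥ 1 : ∃ g₁,…,gₙ ∈ F with g + g₁ + ⋯ + gₙ ∉ K}. Then for every n ≥ 1 one has |ℓ⁻¹(n)| ≤ δ·|F|^{n−1}·|K|, and consequently |ℓ⁻¹({1,2,…,m})| ≤ δ·(1 + |F| + ⋯ + |F|^{m−1})·|K| for every m ≥ 1. -/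

import Mathlib

/-!
A point `g` with escape time `n + 1 ≥ 2` has a neighbour `g + a`, `a ∈ F`, of escape time `n`, so the
level set `ℓ⁻¹(n + 1)` lies in `ℓ⁻¹(n) - F` and has at most `|F|` times as many points. The level set
`ℓ⁻¹(1)` consists of points of `K` leaving `K` after one step, and by `(F, δ)`-invariance there are at
most `δ |K|` of them.
-/

open Finset Pointwise

variable {G : Type*} [AddCommGroup G]

def EscapesIn (F K : Finset G) (g : G) (n : ℕ) : Prop :=
  ∃ gs : Fin n → G, (∀ i, gs i ∈ F) ∧ g + ∑ i, gs i ∉ K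

def IsEscapeTime (F K : Finset G) (ℓ : G → ℕ) : Prop :=
  ∀ g ∈ K, 1 ≤ ℓ g ∧ EscapesIn F K g (ℓ g) ∧ ∀ n, 1 ≤ n → EscapesIn F K g n → ℓ g ≤ n

section EscapesIn

variable {F K : Finset G} {g : G} {n : ℕ}

theorem escapesIn_zero : EscapesIn F K g 0 ↔ g ∉ K := by
  simp [EscapesIn]

theorem escapesIn_succ : EscapesIn F K g (n + 1) ↔ ∃ a ∈ F, EscapesIn F K (g + a) n := by
  constructor
  · rintro ⟨gs, hgsF, hgsK⟩
    refine ⟨gs 0, hgsF 0, fun i => gs i.succ, fun i => hgsF _, ?_⟩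
    rwa [Fin.sum_univ_succ, ← add_assoc] at hgsK
  · rintro ⟨a, haF, gs, hgsF, hgsK⟩
    refine ⟨Fin.cons a gs, fun i => Fin.cases haF hgsF i, ?_⟩
    simpa only [Fin.sum_univ_succ, Fin.cons_zero, Fin.cons_succ, ← add_assoc] using hgsK

theorem escapesIn_one : EscapesIn F K g 1 ↔ ∃ a ∈ F, g + a ∉ K := by
  simp only [escapesIn_succ, escapesIn_zero]

end EscapesIn

section IsEscapeTime

variable {F K : Finset G} {ℓ : G → ℕ}

theorem IsEscapeTime.exists_add_of_eq_succ (hℓ : IsEscapeTime F K ℓ) {g : G} {n : ℕ} (hn : 1 ≤ n)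
    (hgK : g ∈ K) (hg : ℓ g = n + 1) : ∃ a ∈ F, g + a ∈ K ∧ ℓ (g + a) = n := by
  obtain ⟨-, hesc, hmin⟩ := hℓ g hgK
  obtain ⟨a, haF, hgaesc⟩ := escapesIn_succ.mp (hg ▸ hesc)
  have hgaK : g + a ∈ K := by
    by_contra hgaK
    have := hmin 1 le_rfl (escapesIn_one.mpr ⟨a, haF, hgaK⟩)
    omega
  obtain ⟨-, hgaesc', hgamin⟩ := hℓ (g + a) hgaK
  have hle : ℓ (g + a) ≤ n := hgamin n hn hgaesc
  have hge : ℓ g ≤ ℓ (g + a) + 1 := hmin _ (by omega) (escapesIn_succ.mpr ⟨a, haF, hgaesc'⟩)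
  exact ⟨a, haF, hgaK, by omega⟩

variable [DecidableEq G]

theorem IsEscapeTime.filter_eq_one_subset (hℓ : IsEscapeTime F K ℓ) :
    K.filter (ℓ · = 1) ⊆ K \ K.filter fun x => ∀ g ∈ F, x + g ∈ K := by
  intro g hg
  obtain ⟨hgK, hg1⟩ := mem_filter.mp hg
  obtain ⟨a, haF, hgaK⟩ := escapesIn_one.mp (hg1 ▸ (hℓ g hgK).2.1)
  exact mem_sdiff.mpr ⟨hgK, fun hmem => hgaK ((mem_filter.mp hmem).2 a haF)⟩

theorem IsEscapeTime.filter_eq_succ_subset (hℓ : IsEscapeTime F K ℓ) {n : ℕ} (hn : 1 ≤ n) :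
    K.filter (ℓ · = n + 1) ⊆ K.filter (ℓ · = n) - F := by
  intro g hg
  obtain ⟨hgK, hgn⟩ := mem_filter.mp hg
  obtain ⟨a, haF, hgaK, hga⟩ := hℓ.exists_add_of_eq_succ hn hgK hgn
  exact mem_sub.mpr ⟨g + a, mem_filter.mpr ⟨hgaK, hga⟩, a, haF, add_sub_cancel_right g a⟩

theorem IsEscapeTime.card_filter_eq_le (hℓ : IsEscapeTime F K ℓ) {δ : ℝ}
    (hinv : (1 - δ) * #K ≤ (#(K.filter fun x => ∀ g ∈ F, x + g ∈ K) : ℝ)) {n : ℕ} (hn : 1 ≤ n) :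
    (#(K.filter (ℓ · = n)) : ℝ) ≤ δ * (#F : ℝ) ^ (n - 1) * #K := by
  induction n, hn using Nat.le_induction with
  | base =>
    have hsplit := card_sdiff_add_card_eq_card (filter_subset (fun x => ∀ g ∈ F, x + g ∈ K) K)
    have hone : (#(K.filter (ℓ · = 1)) : ℝ) + #(K.filter fun x => ∀ g ∈ F, x + g ∈ K) ≤ #K := by
      exact_mod_cast hsplit ▸ Nat.add_le_add_right (card_le_card hℓ.filter_eq_one_subset) _
    simp only [Nat.sub_self, pow_zero, mul_one]
    linarith
  | succ n hn ih =>
    have hsucc : (#(K.filter (ℓ · = n + 1)) : ℝ) ≤ #(K.filter (ℓ · = n)) * #F := by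
      exact_mod_cast (card_le_card (hℓ.filter_eq_succ_subset hn)).trans card_sub_le
    calc (#(K.filter (ℓ · = n + 1)) : ℝ) ≤ #(K.filter (ℓ · = n)) * #F := hsucc
      _ ≤ δ * (#F : ℝ) ^ (n - 1) * #K * #F := by gcongr
      _ = δ * (#F : ℝ) ^ (n + 1 - 1) * #K := by
        rw [show n + 1 - 1 = n - 1 + 1 by omega, pow_succ]; ring

theorem IsEscapeTime.filter_le_subset_biUnion (hℓ : IsEscapeTime F K ℓ) (m : ℕ) :
    K.filter (ℓ · ≤ m) ⊆ (range m).biUnion fun i => K.filter (ℓ · = i + 1) := by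
  intro g hg
  obtain ⟨hgK, hgm⟩ := mem_filter.mp hg
  have := (hℓ g hgK).1
  exact mem_biUnion.mpr ⟨ℓ g - 1, mem_range.mpr (by omega), mem_filter.mpr ⟨hgK, by omega⟩⟩

theorem IsEscapeTime.card_filter_le_le (hℓ : IsEscapeTime F K ℓ) {δ : ℝ}
    (hinv : (1 - δ) * #K ≤ (#(K.filter fun x => ∀ g ∈ F, x + g ∈ K) : ℝ)) (m : ℕ) :
    (#(K.filter (ℓ · ≤ m)) : ℝ) ≤ δ * (∑ i ∈ range m, (#F : ℝ) ^ i) * #K := by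
  have hunion : (#(K.filter (ℓ · ≤ m)) : ℝ) ≤ ∑ i ∈ range m, (#(K.filter (ℓ · = i + 1)) : ℝ) := by
    exact_mod_cast (card_le_card (hℓ.filter_le_subset_biUnion m)).trans card_biUnion_le
  calc (#(K.filter (ℓ · ≤ m)) : ℝ) ≤ ∑ i ∈ range m, (#(K.filter (ℓ · = i + 1)) : ℝ) := hunion
    _ ≤ ∑ i ∈ range m, δ * (#F : ℝ) ^ i * #K :=
      sum_le_sum fun i _ => by simpa using hℓ.card_filter_eq_le hinv (Nat.le_add_left 1 i)
    _ = δ * (∑ i ∈ range m, (#F : ℝ) ^ i) * #K := by rw [mul_sum, sum_mul]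

end IsEscapeTime

theorem stmt10_general (N : ℕ) (F K : Finset (Fin N → ℤ)) (δ : ℝ)
    (hinv : (1 - δ) * K.card ≤ ((K.filter fun x => ∀ g ∈ F, x + g ∈ K).card : ℝ))
    (ℓ : (Fin N → ℤ) → ℕ)
    (hℓ : ∀ g ∈ K, 1 ≤ ℓ g ∧
      (∃ gs : Fin (ℓ g) → (Fin N → ℤ), (∀ i, gs i ∈ F) ∧ g + ∑ i, gs i ∉ K) ∧
      (∀ n : ℕ, 1 ≤ n →
        (∃ gs : Fin n → (Fin N → ℤ), (∀ i, gs i ∈ F) ∧ g + ∑ i, gs i ∉ K) → ℓ g ≤ n)) :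
    (∀ n : ℕ, 1 ≤ n →
      ((K.filter fun g => ℓ g = n).card : ℝ) ≤ δ * (F.card : ℝ) ^ (n - 1) * K.card) ∧
    (∀ m : ℕ, 1 ≤ m →
      ((K.filter fun g => ℓ g ≤ m).card : ℝ) ≤
        δ * (∑ i ∈ Finset.range m, (F.card : ℝ) ^ i) * K.card) := by
  have hesc : IsEscapeTime F K ℓ := hℓ
  exact ⟨fun n hn => hesc.card_filter_eq_le hinv hn, fun m _ => hesc.card_filter_le_le hinv m⟩

theorem stmt10 (N : ℕ) (hN : 1 ≤ N) (F K : Finset (Fin N → ℤ)) (δ : ℝ) (hδ : 0 < δ)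
    (hF : ∃ g ∈ F, g ≠ 0)
    (hinv : (1 - δ) * K.card ≤ ((K.filter fun x => ∀ g ∈ F, x + g ∈ K).card : ℝ))
    (ℓ : (Fin N → ℤ) → ℕ)
    (hℓ : ∀ g ∈ K, 1 ≤ ℓ g ∧
      (∃ gs : Fin (ℓ g) → (Fin N → ℤ), (∀ i, gs i ∈ F) ∧ g + ∑ i, gs i ∉ K) ∧
      (∀ n : ℕ, 1 ≤ n →
        (∃ gs : Fin n → (Fin N → ℤ), (∀ i, gs i ∈ F) ∧ g + ∑ i, gs i ∉ K) → ℓ g ≤ n)) :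
    (∀ n : ℕ, 1 ≤ n →
      ((K.filter fun g => ℓ g = n).card : ℝ) ≤ δ * (F.card : ℝ) ^ (n - 1) * K.card) ∧
    (∀ m : ℕ, 1 ≤ m →
      ((K.filter fun g => ℓ g ≤ m).card : ℝ) ≤
        δ * (∑ i ∈ Finset.range m, (F.card : ℝ) ^ i) * K.card) :=
  stmt10_general N F K δ hinv ℓ hℓ
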